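/- Let (R, Q, α) be a log ring and let I, J be ideals of the monoid Q. Assume that R is α-flat. Then the ideal of R generated by α(I) intersected with the ideal of R generated by α(J) equals the ideal of R generated by α(I ∩ J); that is, α(I)R ∩ α(J)R = α(I ∩ J)R. -/

import Mathlib

open CategoryTheory

universe u

/-- The ring homomorphism `ℤ[Q] → R` induced by a monoid homomorphism `α` from `Q` to the
multiplicative monoid of `R`; it makes `R` a `ℤ[Q]`-algebra. -/
noncomputable def logRingHom {R Q : Type*} [CommRing R] [AddCommMonoid Q]
    (α : Multiplicative Q →* R) : AddMonoidAlgebra ℤ Q →+* R :=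
  ((AddMonoidAlgebra.lift ℤ R Q) α).toRingHom

/-- For a subset `I ⊆ Q`, the ideal `ℤ[I]` of the monoid algebra `ℤ[Q]` spanned by the
basis elements `e^a` for `a ∈ I`. -/
noncomputable def monoidIdealSpan {Q : Type*} [AddCommMonoid Q] (I : Set Q) :
    Ideal (AddMonoidAlgebra ℤ Q) :=
  Ideal.span ((fun a : Q => (AddMonoidAlgebra.single a 1 : AddMonoidAlgebra ℤ Q)) '' I)

/-- `R` is `α`-flat: `Tor₁^{ℤ[Q]}(ℤ[Q]/ℤ[I], R) = 0` for every ideal `I` of the monoid `Q`. -/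
noncomputable def IsAlphaFlat {R Q : Type u} [CommRing R] [AddCommMonoid Q]
    (α : Multiplicative Q →* R) : Prop :=
  letI : Module (AddMonoidAlgebra ℤ Q) R := (logRingHom α).toModule
  ∀ I : Set Q, (∀ a : Q, ∀ x ∈ I, a + x ∈ I) →
    Limits.IsZero
      (((Tor (ModuleCat (AddMonoidAlgebra ℤ Q)) 1).obj
          (ModuleCat.of (AddMonoidAlgebra ℤ Q)
            (AddMonoidAlgebra ℤ Q ⧸ monoidIdealSpan I))).obj
        (ModuleCat.of (AddMonoidAlgebra ℤ Q) R))

/-!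
Write `A = ℤ[Q]`, `a = ℤ[I]`, `b = ℤ[J]`; then `ℤ[I ∪ J] = a + b`, `ℤ[I ∩ J] = a ∩ b` and
`α(K)R = ℤ[K] R`. Choose a surjection `π : P → R` from a projective `A`-module, with kernel `N`.
Vanishing of `Tor₁(A/(a + b), R)` gives `N ∩ (a + b)P = (a + b)N`. Lift `x ∈ aR ∩ bR` to `u ∈ aP`
and `v ∈ bP`; then `u - v ∈ N ∩ (a + b)P`, so `u - v = p + q` with `p ∈ aN`, `q ∈ bN`, and
`u - p = v + q` lies in `aP ∩ bP = (a ∩ b)P` (as in a free module) and maps to `x`.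
-/

open TensorProduct

section MonoidIdeal

variable {Q : Type*} [AddCommMonoid Q]

theorem mem_monoidIdealSpan_iff {K : Set Q} (hK : ∀ a : Q, ∀ x ∈ K, a + x ∈ K)
    (f : AddMonoidAlgebra ℤ Q) : f ∈ monoidIdealSpan K ↔ ∀ a ∈ f.coeff.support, a ∈ K :=
  AddMonoidAlgebra.mem_ideal_span_of'_image.trans <| forall₂_congr fun a _ =>
    ⟨fun ⟨b, hb, d, had⟩ => had ▸ hK d b hb, fun ha => ⟨a, ha, 0, (zero_add a).symm⟩⟩

theorem monoidIdealSpan_inter {I J : Set Q} (hI : ∀ a : Q, ∀ x ∈ I, a + x ∈ I)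
    (hJ : ∀ a : Q, ∀ x ∈ J, a + x ∈ J) :
    monoidIdealSpan (I ∩ J) = monoidIdealSpan I ⊓ monoidIdealSpan J := by
  have hIJ : ∀ a : Q, ∀ x ∈ I ∩ J, a + x ∈ I ∩ J := fun a x hx => ⟨hI a x hx.1, hJ a x hx.2⟩
  ext f
  rw [Submodule.mem_inf, mem_monoidIdealSpan_iff hIJ, mem_monoidIdealSpan_iff hI,
    mem_monoidIdealSpan_iff hJ]
  exact ⟨fun h => ⟨fun a ha => (h a ha).1, fun a ha => (h a ha).2⟩,
    fun h a ha => ⟨h.1 a ha, h.2 a ha⟩⟩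

theorem monoidIdealSpan_union (I J : Set Q) :
    monoidIdealSpan (I ∪ J) = monoidIdealSpan I ⊔ monoidIdealSpan J := by
  rw [monoidIdealSpan, Set.image_union, Ideal.span_union]
  rfl

end MonoidIdeal

section IdealSMul

variable {A : Type*} [CommRing A]

theorem Finsupp.mem_smul_top_iff {ι : Type*} (a : Ideal A) (x : ι →₀ A) :
    x ∈ a • (⊤ : Submodule A (ι →₀ A)) ↔ ∀ i, x i ∈ a := by
  refine ⟨fun hx => ?_, fun h => ?_⟩
  · induction hx using Submodule.smul_induction_on' with
    | smul r hr n _ => exact fun i => a.mul_mem_right (n i) hr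
    | add y _ z _ hy hz => exact fun i => a.add_mem (hy i) (hz i)
  · rw [← x.sum_single]
    refine Submodule.sum_mem _ fun i _ => ?_
    rw [← mul_one (x i), ← Finsupp.smul_single']
    exact Submodule.smul_mem_smul (h i) trivial

theorem Module.Projective.smul_top_inf_smul_top {P : Type*} [AddCommGroup P] [Module A P]
    [Module.Projective A P] (a b : Ideal A) :
    (a • ⊤ : Submodule A P) ⊓ (b • ⊤) = (a ⊓ b) • ⊤ := by
  obtain ⟨s, hs⟩ := Module.projective_def'.mp ‹_›
  refine le_antisymm (fun x hx => ?_) (le_inf (Submodule.smul_mono_left inf_le_left)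
    (Submodule.smul_mono_left inf_le_right))
  have hsx : s x ∈ (a ⊓ b) • (⊤ : Submodule A (P →₀ A)) := by
    have ha := Submodule.smul_top_le_comap_smul_top a s hx.1
    have hb := Submodule.smul_top_le_comap_smul_top b s hx.2
    rw [Submodule.mem_comap, Finsupp.mem_smul_top_iff] at ha hb
    exact (Finsupp.mem_smul_top_iff _ _).mpr fun i => ⟨ha i, hb i⟩
  rw [← LinearMap.id_apply (R := A) x, ← hs, LinearMap.comp_apply]
  exact Submodule.smul_top_le_comap_smul_top _ _ hsx

theorem smul_top_inf_smul_top_of_surjective {P M : Type*} [AddCommGroup P] [Module A P]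
    [Module.Projective A P] [AddCommGroup M] [Module A M] {π : P →ₗ[A] M}
    (hπ : Function.Surjective π) (a b : Ideal A)
    (hker : LinearMap.ker π ⊓ (a ⊔ b) • ⊤ ≤ (a ⊔ b) • LinearMap.ker π) :
    (a • ⊤ : Submodule A M) ⊓ (b • ⊤) = (a ⊓ b) • ⊤ := by
  refine le_antisymm (fun x hx => ?_) (le_inf (Submodule.smul_mono_left inf_le_left)
    (Submodule.smul_mono_left inf_le_right))
  have hmap (c : Ideal A) : Submodule.map π (c • ⊤) = c • ⊤ := by
    rw [Submodule.map_smul'', Submodule.map_top, LinearMap.range_eq_top.mpr hπ]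
  obtain ⟨u, hu, rfl⟩ := (hmap a).symm ▸ hx.1
  obtain ⟨v, hv, hvu⟩ := (hmap b).symm ▸ hx.2
  have hdiff : u - v ∈ LinearMap.ker π ⊓ (a ⊔ b) • ⊤ := by
    refine ⟨by simp [hvu], ?_⟩
    rw [Submodule.sup_smul]
    exact sub_mem (Submodule.mem_sup_left hu) (Submodule.mem_sup_right hv)
  have hsplit : u - v ∈ a • LinearMap.ker π ⊔ b • LinearMap.ker π :=
    Submodule.sup_smul a b (LinearMap.ker π) ▸ hker hdiff
  obtain ⟨p, hp, q, hq, hpq⟩ := Submodule.mem_sup.mp hsplit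
  have hpker : p ∈ LinearMap.ker π := Submodule.smul_le_right hp
  rw [← hmap]
  refine ⟨u - p, ?_, by simp [LinearMap.mem_ker.mp hpker]⟩
  rw [← Module.Projective.smul_top_inf_smul_top]
  refine ⟨sub_mem hu (Submodule.smul_mono le_rfl le_top hp), ?_⟩
  rw [show u - p = v + q by rw [sub_eq_iff_eq_add, add_assoc, add_comm q, hpq]; abel]
  exact add_mem hv (Submodule.smul_mono le_rfl le_top hq)

end IdealSMul

section QuotientTensor

variable {A : Type*} [CommRing A] (c : Ideal A)

theorem mk_quotient_one_surjective (M : Type*) [AddCommGroup M] [Module A M] :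
    Function.Surjective (TensorProduct.mk A (A ⧸ c) M 1) := fun t => by
  obtain ⟨m, hm⟩ := Submodule.Quotient.mk_surjective _ (quotTensorEquivQuotSMul M c t)
  exact ⟨m, by rw [TensorProduct.mk_apply, ← quotTensorEquivQuotSMul_symm_mk, hm,
    LinearEquiv.symm_apply_apply]⟩

theorem one_tmul_eq_zero_iff {M : Type*} [AddCommGroup M] [Module A M] (m : M) :
    (1 : A ⧸ c) ⊗ₜ[A] m = 0 ↔ m ∈ c • (⊤ : Submodule A M) := by
  rw [← LinearMap.ker_tensorProductMk]
  rfl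

theorem range_inf_smul_top_le_of_lTensor_exact {M₂ M₁ M₀ : Type*} [AddCommGroup M₂]
    [AddCommGroup M₁] [AddCommGroup M₀] [Module A M₂] [Module A M₁] [Module A M₀]
    (d₂ : M₂ →ₗ[A] M₁) (d₁ : M₁ →ₗ[A] M₀) (hd : d₁ ∘ₗ d₂ = 0)
    (hexact : LinearMap.ker (d₁.lTensor (A ⧸ c)) ≤ LinearMap.range (d₂.lTensor (A ⧸ c))) :
    LinearMap.range d₁ ⊓ c • ⊤ ≤ c • LinearMap.range d₁ := by
  rintro _ ⟨⟨u, rfl⟩, hu⟩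
  obtain ⟨t, ht⟩ := hexact (show d₁.lTensor (A ⧸ c) (1 ⊗ₜ u) = 0 by
    rw [LinearMap.lTensor_tmul, one_tmul_eq_zero_iff]; exact hu)
  obtain ⟨w, rfl⟩ := mk_quotient_one_surjective c M₂ t
  rw [TensorProduct.mk_apply, LinearMap.lTensor_tmul] at ht
  have hw : u - d₂ w ∈ c • (⊤ : Submodule A M₁) := by
    rw [← one_tmul_eq_zero_iff, TensorProduct.tmul_sub, ht, sub_self]
  have hdw : d₁ (d₂ w) = 0 := LinearMap.congr_fun hd w
  have := Submodule.smul_top_le_comap_smul_top c d₁.rangeRestrict hw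
  rw [Submodule.mem_comap, Submodule.mem_smul_top_iff] at this
  simpa [hdw] using this

end QuotientTensor

theorem CategoryTheory.ProjectiveResolution.range_d_inf_smul_top_le {A : Type u} [CommRing A]
    {M : ModuleCat.{u} A} (P : ProjectiveResolution M) (c : Ideal A)
    (hTor : Limits.IsZero (((Tor (ModuleCat A) 1).obj (ModuleCat.of A (A ⧸ c))).obj M)) :
    LinearMap.range (P.complex.d 1 0).hom ⊓ c • ⊤ ≤ c • LinearMap.range (P.complex.d 1 0).hom := by
  let F := (MonoidalCategory.tensoringLeft (ModuleCat A)).obj (ModuleCat.of A (A ⧸ c))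
  have hexact : ((F.mapHomologicalComplex _).obj P.complex).ExactAt 1 :=
    (HomologicalComplex.exactAt_iff_isZero_homology _ _).mpr
      (hTor.of_iso (P.isoLeftDerivedObj F 1).symm)
  rw [HomologicalComplex.exactAt_iff' _ 2 1 0 (by simp) (by simp),
    ShortComplex.moduleCat_exact_iff_ker_sub_range] at hexact
  exact range_inf_smul_top_le_of_lTensor_exact c (P.complex.d 2 1).hom (P.complex.d 1 0).hom
    (congrArg ModuleCat.Hom.hom (P.complex.d_comp_d 2 1 0)) hexact

theorem smul_top_inf_smul_top_of_isZero_tor {A M : Type u} [CommRing A] [AddCommGroup M]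
    [Module A M] (a b : Ideal A)
    (hTor : Limits.IsZero
      (((Tor (ModuleCat A) 1).obj (ModuleCat.of A (A ⧸ (a ⊔ b)))).obj (ModuleCat.of A M))) :
    (a • ⊤ : Submodule A M) ⊓ (b • ⊤) = (a ⊓ b) • ⊤ := by
  obtain ⟨P⟩ := HasProjectiveResolution.out (Z := ModuleCat.of A M)
  have : Module.Projective A (P.complex.X 0) :=
    (IsProjective.iff_projective _).mpr (P.projective 0)
  refine smul_top_inf_smul_top_of_surjective
    ((ModuleCat.epi_iff_surjective (P.π.f 0)).mp inferInstance) a b ?_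
  rw [← P.exact₀.moduleCat_range_eq_ker]
  exact P.range_d_inf_smul_top_le (a ⊔ b) hTor

section LogRing

variable {R Q : Type*} [CommRing R] [AddCommMonoid Q]

theorem logRingHom_single (α : Multiplicative Q →* R) (q : Q) :
    logRingHom α (AddMonoidAlgebra.single q 1) = α (Multiplicative.ofAdd q) := by
  rw [logRingHom, AlgHom.toRingHom_eq_coe, AlgHom.coe_toRingHom, AddMonoidAlgebra.lift_single,
    one_smul]

theorem map_monoidIdealSpan (α : Multiplicative Q →* R) (K : Set Q) :
    Ideal.map (logRingHom α) (monoidIdealSpan K) =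
      Ideal.span ((fun q : Q => α (Multiplicative.ofAdd q)) '' K) := by
  rw [monoidIdealSpan, Ideal.map_span, ← Set.image_comp]
  exact congrArg Ideal.span (Set.image_congr fun q _ => logRingHom_single α q)

end LogRing

/-- Let `(R, Q, α)` be a log ring with `R` `α`-flat, and let `I, J` be ideals of the monoid
`Q`. Then `α(I)R ∩ α(J)R = α(I ∩ J)R` as ideals of `R`. -/
theorem alphaFlat_span_inter {R Q : Type u} [CommRing R] [AddCommMonoid Q]
    (α : Multiplicative Q →* R) (hflat : IsAlphaFlat α)
    (I J : Set Q) (hI : ∀ a : Q, ∀ x ∈ I, a + x ∈ I) (hJ : ∀ a : Q, ∀ x ∈ J, a + x ∈ J) :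
    Ideal.span ((fun q : Q => α (Multiplicative.ofAdd q)) '' I) ⊓
        Ideal.span ((fun q : Q => α (Multiplicative.ofAdd q)) '' J) =
      Ideal.span ((fun q : Q => α (Multiplicative.ofAdd q)) '' (I ∩ J)) := by
  let := (logRingHom α).toAlgebra
  have hTor := hflat (I ∪ J) fun a x hx => hx.imp (hI a x) (hJ a x)
  rw [monoidIdealSpan_union] at hTor
  rw [← map_monoidIdealSpan, ← map_monoidIdealSpan, ← map_monoidIdealSpan,
    monoidIdealSpan_inter hI hJ]
  apply Submodule.restrictScalars_injective (AddMonoidAlgebra ℤ Q)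
  rw [Submodule.restrictScalars_inf]
  simpa only [Ideal.smul_top_eq_map, RingHom.algebraMap_toAlgebra] using
    smul_top_inf_smul_top_of_isZero_tor _ _ hTor
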